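/- Let G = (V, E) be a tree with |V| ≥ 3, with the set of all its leaves as boundary δΩ, and let L be the diameter of G. Then λ₂(G, δΩ) ≤ 2 / L. -/

import Mathlib

open Finset

variable {V : Type*}

/-- The Dirichlet energy `∑_{{x,y} ∈ E} (f(x) - f(y))²` of a function on the vertices. -/
noncomputable def graphEnergy [Fintype V] (G : SimpleGraph V) (f : V → ℝ) : ℝ :=
  ∑ e ∈ G.edgeSet.toFinite.toFinset,
    Sym2.lift ⟨fun x y => (f x - f y) ^ 2, fun _ _ => by ring⟩ e

/-- The first non-trivial Steklov eigenvalue `λ₂(G, δΩ)`, defined as the minimum of the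
Rayleigh quotient over functions summing to zero on the boundary and not identically
zero on the boundary. -/
noncomputable def steklovLambda2 [Fintype V] (G : SimpleGraph V) (B : Finset V) : ℝ :=
  sInf {r | ∃ f : V → ℝ, ∑ x ∈ B, f x = 0 ∧ (∃ x ∈ B, f x ≠ 0) ∧
    r = graphEnergy G f / ∑ x ∈ B, f x ^ 2}

section helpers

open SimpleGraph Walk

set_option linter.unusedSectionVars false

variable [Fintype V] [DecidableEq V] {G : SimpleGraph V}

private lemma walk_eq_of_isPath (hT : G.IsTree) {u v : V} {p q : G.Walk u v}
    (hp : p.IsPath) (hq : q.IsPath) : p = q :=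
  congrArg Subtype.val (hT.IsAcyclic.path_unique ⟨p, hp⟩ ⟨q, hq⟩)

private lemma split_le {a b z : V} (p : G.Walk a b) (hz : z ∈ p.support) :
    G.dist a z + G.dist z b ≤ p.length := by
  have h : (p.takeUntil z hz).length + (p.dropUntil z hz).length = p.length := by
    rw [← Walk.length_append, p.take_spec hz]
  calc G.dist a z + G.dist z b
      ≤ (p.takeUntil z hz).length + (p.dropUntil z hz).length :=
        add_le_add (SimpleGraph.dist_le _) (SimpleGraph.dist_le _)
    _ = p.length := h

private lemma dist_adj_cases (hT : G.IsTree) (u : V) {x y : V} (h : G.Adj x y) :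
    G.dist u y = G.dist u x + 1 ∨ G.dist u x = G.dist u y + 1 := by
  obtain ⟨p, hp, hl⟩ := hT.isConnected.exists_path_of_dist u x
  by_cases hy : y ∈ p.support
  · right
    have h1 := split_le p hy
    have h2 : G.dist u x ≤ G.dist u y + G.dist y x := hT.isConnected.dist_triangle
    have h3 : G.dist y x = 1 := SimpleGraph.dist_eq_one_iff_adj.mpr h.symm
    rw [hl] at h1
    omega
  · left
    have hq : (p.concat h).IsPath := by
      rw [Walk.isPath_def, Walk.support_concat, List.nodup_append]
      refine ⟨hp.support_nodup, List.nodup_singleton y, fun z hz1 b hb => ?_⟩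
      simp only [List.mem_singleton] at hb
      subst hb
      intro hzb
      subst hzb
      exact hy hz1
    obtain ⟨r, hr, hrl⟩ := hT.isConnected.exists_path_of_dist u y
    have heq := walk_eq_of_isPath hT hq hr
    have hlen : (p.concat h).length = r.length := by rw [heq]
    rw [Walk.length_concat, hl, hrl] at hlen
    omega

private lemma edge_mem_geodesic (hT : G.IsTree) {u v x y : V} (h : G.Adj x y)
    (hux : G.dist u y = G.dist u x + 1) (hvy : G.dist v x = G.dist v y + 1)
    {P : G.Walk u v} (hP : P.IsPath) : s(x, y) ∈ P.edges := by
  obtain ⟨px, hpx, hlx⟩ := hT.isConnected.exists_path_of_dist u x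
  obtain ⟨py, hpy, hly⟩ := hT.isConnected.exists_path_of_dist y v
  have hdisj : ∀ z ∈ px.support, z ∉ py.support := by
    intro z hz1 hz2
    have e1 := split_le px hz1
    have e2 := split_le py hz2
    rw [hlx] at e1; rw [hly] at e2
    have t1 : G.dist u y ≤ G.dist u z + G.dist z y := hT.isConnected.dist_triangle
    have t2 : G.dist v x ≤ G.dist v z + G.dist z x := hT.isConnected.dist_triangle
    have c1 : G.dist z y = G.dist y z := SimpleGraph.dist_comm
    have c2 : G.dist z v = G.dist v z := SimpleGraph.dist_comm
    have c3 : G.dist y v = G.dist v y := SimpleGraph.dist_comm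
    omega
  have hW : (px.append (Walk.cons h py)).IsPath := by
    rw [Walk.isPath_def, Walk.support_append, Walk.support_cons, List.tail_cons,
      List.nodup_append]
    exact ⟨hpx.support_nodup, hpy.support_nodup,
      fun a ha b hb hab => hdisj a ha (by rw [hab]; exact hb)⟩
  have heq := walk_eq_of_isPath hT hP hW
  rw [heq, Walk.edges_append, Walk.edges_cons]
  simp

private lemma degree_eq_one [DecidableRel G.Adj] (hT : G.IsTree) {u v : V}
    (hd : ∀ x y : V, G.dist x y ≤ G.dist u v) (hpos : 0 < G.dist u v) :
    G.degree u = 1 := by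
  obtain ⟨p, hp, hl⟩ := hT.isConnected.exists_path_of_dist u v
  have hlen : 0 < p.length := by omega
  have hadj0 : G.Adj u (p.getVert 1) := by
    have := p.adj_getVert_succ hlen
    rwa [Walk.getVert_zero] at this
  have key : ∀ w, G.Adj u w → w = p.getVert 1 := by
    intro w hw
    rcases dist_adj_cases hT v hw with h1 | h2
    · exfalso
      have hle := hd v w
      have c2 : G.dist v u = G.dist u v := SimpleGraph.dist_comm
      omega
    · obtain ⟨r, hr, hrl⟩ := hT.isConnected.exists_path_of_dist w v
      have hu_not : u ∉ r.support := by
        intro hu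
        have hs := split_le r hu
        rw [hrl] at hs
        have h3 : 0 < G.dist w u := hT.isConnected.pos_dist_of_ne hw.ne'
        have c : G.dist v w = G.dist w v := SimpleGraph.dist_comm
        have c2 : G.dist u v = G.dist v u := SimpleGraph.dist_comm
        omega
      have hq : (Walk.cons hw r).IsPath := hr.cons hu_not
      have heq := walk_eq_of_isPath hT hq hp
      have := congrArg (fun q : G.Walk u v => q.getVert 1) heq
      simpa [Walk.getVert_cons_succ, Walk.getVert_zero] using this
  have hnb : G.neighborFinset u = {p.getVert 1} := by
    ext w
    simp only [mem_neighborFinset, Finset.mem_singleton]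
    exact ⟨key w, fun hw => hw ▸ hadj0⟩
  rw [← card_neighborFinset_eq_degree, hnb, Finset.card_singleton]

private lemma graphEnergy_nonneg (G : SimpleGraph V) (f : V → ℝ) :
    0 ≤ graphEnergy G f := by
  refine Finset.sum_nonneg fun e _ => ?_
  induction e using Sym2.ind with
  | _ x y => simp only [Sym2.lift_mk]; positivity

end helpers

/-- For a tree with the set of all its leaves as boundary and diameter `L`, `λ₂ ≤ 2 / L`. -/
theorem lambda2_tree_diam [Fintype V] [DecidableEq V] (G : SimpleGraph V) [DecidableRel G.Adj]
    (hT : G.IsTree) (hV : 3 ≤ Fintype.card V) (L : ℕ) (hL : G.diam = L) :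
    steklovLambda2 G ({x : V | G.degree x = 1} : Finset V) ≤ 2 / (L : ℝ) := by
  classical
  have hNe : Nonempty V := Fintype.card_pos_iff.mp (by omega)
  have hNt : Nontrivial V := Fintype.one_lt_card_iff_nontrivial.mp (by omega)
  -- ediam ≠ ⊤
  have hetop : G.ediam ≠ ⊤ := by
    obtain ⟨a, b, hab⟩ := SimpleGraph.exists_edist_eq_ediam_of_finite (G := G)
    rw [← hab]
    exact SimpleGraph.edist_ne_top_iff_reachable.mpr (hT.isConnected a b)
  have hdle : ∀ x y : V, G.dist x y ≤ L := fun x y => hL ▸ SimpleGraph.dist_le_diam hetop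
  obtain ⟨u, v, huv⟩ := SimpleGraph.exists_dist_eq_diam (G := G)
  rw [hL] at huv
  have hL1 : 1 ≤ L := by
    obtain ⟨a, b, hab⟩ := hNt
    have := hT.isConnected.pos_dist_of_ne hab
    have := hdle a b
    omega
  have hne2 : u ≠ v := by
    intro h; rw [h, SimpleGraph.dist_self] at huv; omega
  set B : Finset V := ({x : V | G.degree x = 1} : Finset V) with hB
  have hmemB : ∀ x : V, x ∈ B ↔ G.degree x = 1 := by
    intro x; rw [hB]; simp
  have hu : u ∈ B := (hmemB u).mpr <| by
    refine degree_eq_one hT (fun x y => ?_) (by rw [huv]; omega)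
    rw [huv]; exact hdle x y
  have hvu : G.dist v u = L := by rw [SimpleGraph.dist_comm]; exact huv
  have hv : v ∈ B := (hmemB v).mpr <| by
    refine degree_eq_one hT (fun x y => ?_) (by rw [hvu]; omega)
    rw [hvu]; exact hdle x y
  -- the test function
  set f : V → ℝ := fun x => (G.dist u x : ℝ) - (G.dist v x : ℝ) with hf
  set c : ℝ := (∑ x ∈ B, f x) / B.card with hc
  set g : V → ℝ := fun x => f x - c with hg
  have hBcard : (0 : ℝ) < B.card := by
    have : B.Nonempty := ⟨u, hu⟩
    exact_mod_cast Finset.card_pos.mpr this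
  have hsum : ∑ x ∈ B, g x = 0 := by
    simp only [hg, Finset.sum_sub_distrib, Finset.sum_const, nsmul_eq_mul, hc]
    field_simp
    ring
  have hgd : ∀ x y : V, g x - g y = f x - f y := by intro x y; simp [hg]
  have hfvu : g v - g u = 2 * L := by
    rw [hgd]
    simp only [hf]
    have e1 : G.dist u u = 0 := SimpleGraph.dist_self
    have e2 : G.dist v v = 0 := SimpleGraph.dist_self
    rw [e1, e2, huv, hvu]
    push_cast
    ring
  have hLpos : (0 : ℝ) < L := by exact_mod_cast hL1
  -- energy bound
  obtain ⟨P, hP, hPl⟩ := hT.isConnected.exists_path_of_dist u v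
  rw [huv] at hPl
  have hE : graphEnergy G g ≤ 4 * L := by
    unfold graphEnergy
    have hpt : ∀ e ∈ G.edgeSet.toFinite.toFinset,
        Sym2.lift ⟨fun x y => (g x - g y) ^ 2, fun _ _ => by ring⟩ e ≤
          (if e ∈ P.edges then (4 : ℝ) else 0) := by
      intro e he
      rw [Set.Finite.mem_toFinset] at he
      induction e using Sym2.ind with
      | _ x y =>
        rw [SimpleGraph.mem_edgeSet] at he
        rw [Sym2.lift_mk]
        show (g x - g y) ^ 2 ≤ _
        rcases dist_adj_cases hT u he with h1 | h1 <;>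
          rcases dist_adj_cases hT v he with h2 | h2
        · have hz : g x - g y = 0 := by
            rw [hgd]; simp only [hf]; rw [h1, h2]; push_cast; ring
          rw [hz]
          split_ifs <;> norm_num
        · have hmem := edge_mem_geodesic hT he h1 h2 hP
          rw [if_pos hmem]
          have hz : g x - g y = -2 := by
            rw [hgd]; simp only [hf]; rw [h1, h2]; push_cast; ring
          rw [hz]; norm_num
        · have hmem := edge_mem_geodesic hT he.symm h1 h2 hP
          rw [show s(x, y) = s(y, x) from Sym2.eq_swap, if_pos hmem]
          have hz : g y - g x = -2 := by
            rw [hgd]; simp only [hf]; rw [h1, h2]; push_cast; ring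
          have : g x - g y = 2 := by linarith
          rw [this]; norm_num
        · have hz : g x - g y = 0 := by
            rw [hgd]; simp only [hf]; rw [h1, h2]; push_cast; ring
          rw [hz]
          split_ifs <;> norm_num
    calc ∑ e ∈ G.edgeSet.toFinite.toFinset,
          Sym2.lift ⟨fun x y => (g x - g y) ^ 2, fun _ _ => by ring⟩ e
        ≤ ∑ e ∈ G.edgeSet.toFinite.toFinset, (if e ∈ P.edges then (4 : ℝ) else 0) :=
          Finset.sum_le_sum hpt
      _ = ∑ e ∈ G.edgeSet.toFinite.toFinset.filter (· ∈ P.edges), (4 : ℝ) := by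
          rw [Finset.sum_filter]
      _ = 4 * (G.edgeSet.toFinite.toFinset.filter (· ∈ P.edges)).card := by
          rw [Finset.sum_const]; ring
      _ ≤ 4 * L := by
          have hsub : G.edgeSet.toFinite.toFinset.filter (· ∈ P.edges) ⊆ P.edges.toFinset := by
            intro e he
            rw [Finset.mem_filter] at he
            rw [List.mem_toFinset]
            exact he.2
          have h1 : (G.edgeSet.toFinite.toFinset.filter (· ∈ P.edges)).card ≤
              P.edges.toFinset.card := Finset.card_le_card hsub
          have h2 : P.edges.toFinset.card ≤ P.edges.length := P.edges.toFinset_card_le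
          have h3 : P.edges.length = L := by rw [SimpleGraph.Walk.length_edges, hPl]
          have : (G.edgeSet.toFinite.toFinset.filter (· ∈ P.edges)).card ≤ L := by omega
          have := (Nat.cast_le (α := ℝ)).mpr this
          linarith
  -- denominator bound
  have hden : 2 * (L : ℝ) ^ 2 ≤ ∑ x ∈ B, g x ^ 2 := by
    have hsub : ({u, v} : Finset V) ⊆ B := by
      intro x hx
      rcases Finset.mem_insert.mp hx with rfl | hx
      · exact hu
      · rw [Finset.mem_singleton] at hx; exact hx ▸ hv
    have hle : ∑ x ∈ ({u, v} : Finset V), g x ^ 2 ≤ ∑ x ∈ B, g x ^ 2 :=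
      Finset.sum_le_sum_of_subset_of_nonneg hsub fun _ _ _ => sq_nonneg _
    rw [Finset.sum_pair hne2] at hle
    nlinarith [sq_nonneg (g u + g v), hfvu]
  have hDpos : (0 : ℝ) < ∑ x ∈ B, g x ^ 2 := by nlinarith
  -- nonzero on boundary
  have hnz : ∃ x ∈ B, g x ≠ 0 := by
    by_contra hcon
    push_neg at hcon
    have h1 := hcon u hu
    have h2 := hcon v hv
    rw [h1, h2] at hfvu
    simp at hfvu
    nlinarith
  -- conclude
  have hmem : graphEnergy G g / ∑ x ∈ B, g x ^ 2 ∈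
      {r | ∃ f : V → ℝ, ∑ x ∈ B, f x = 0 ∧ (∃ x ∈ B, f x ≠ 0) ∧
        r = graphEnergy G f / ∑ x ∈ B, f x ^ 2} :=
    ⟨g, hsum, hnz, rfl⟩
  have hbdd : BddBelow {r | ∃ f : V → ℝ, ∑ x ∈ B, f x = 0 ∧ (∃ x ∈ B, f x ≠ 0) ∧
      r = graphEnergy G f / ∑ x ∈ B, f x ^ 2} := by
    refine ⟨0, fun r hr => ?_⟩
    obtain ⟨f', _, _, hrf⟩ := hr
    rw [hrf]
    exact div_nonneg (graphEnergy_nonneg G f') (Finset.sum_nonneg fun _ _ => sq_nonneg _)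
  have hfinal : graphEnergy G g / ∑ x ∈ B, g x ^ 2 ≤ 2 / (L : ℝ) := by
    have step1 : graphEnergy G g / ∑ x ∈ B, g x ^ 2 ≤ (4 * L) / (2 * (L : ℝ) ^ 2) :=
      div_le_div₀ (by positivity) hE (by positivity) hden
    have step2 : (4 * (L : ℝ)) / (2 * (L : ℝ) ^ 2) = 2 / L := by
      field_simp
      ring
    linarith [step1, step2 ▸ step1]
  calc steklovLambda2 G B ≤ graphEnergy G g / ∑ x ∈ B, g x ^ 2 := csInf_le hbdd hmem
    _ ≤ 2 / (L : ℝ) := hfinal
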